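/- arXiv:1711.00724 — 2 statements merged into one kernel-verified Lean document; each statement's English description precedes it below -/
import Mathlib

section
/- For every natural number n ≥ 1, ∫₀^π (sin θ/θ²)·(log(πe/θ))^{−1−2/n} dθ ≥ n/(π·(1+log 2)^{2/n}). In particular these integrals tend to +∞ as n → ∞. -/
open Real Set MeasureTheory Filter

noncomputable section

/-- `φ(t) = log (π e / t)`. -/
def phi (t : ℝ) : ℝ := Real.log (π * Real.exp 1 / t)

/-!
Write `p = -1 - 2/n < -1`. Since `sin θ ≤ θ`, the integrand is dominated by `θ⁻¹ φ(θ)^p`, and on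
`(0, π/2)` Jordan's inequality `sin θ ≥ 2θ/π` bounds it below by `(2/π) θ⁻¹ φ(θ)^p`. The
substitution `u = φ(θ)`, `du = -dθ/θ`, maps `(0, c)` onto `(φ(c), ∞)`, so
`∫₀^c θ⁻¹ φ(θ)^p dθ = ∫_{φ(c)}^∞ u^p du = φ(c)^{p+1} / (-(p+1))`, which is finite. With
`c = π/2`, `φ(π/2) = 1 + log 2` and `-(p+1) = 2/n`, the lower bound is
`n / (π (1 + log 2)^{2/n})`, and it grows linearly in `n`.
-/

lemma phi_eq_log_sub_log {t : ℝ} (ht : 0 < t) : phi t = Real.log (π * Real.exp 1) - Real.log t :=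
  Real.log_div (by positivity) ht.ne'

lemma hasDerivAt_phi {t : ℝ} (ht : 0 < t) : HasDerivAt phi (-t⁻¹) t := by
  refine ((Real.hasDerivAt_log ht.ne').const_sub
    (Real.log (π * Real.exp 1))).congr_of_eventuallyEq ?_
  filter_upwards [Ioi_mem_nhds ht] with s hs
  exact phi_eq_log_sub_log hs

lemma strictAntiOn_phi : StrictAntiOn phi (Ioi 0) := by
  intro a ha b hb hab
  rw [phi_eq_log_sub_log ha, phi_eq_log_sub_log hb]
  linarith [Real.log_lt_log ha hab]

lemma phi_pi : phi π = 1 := by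
  rw [phi, mul_div_cancel_left₀ _ Real.pi_ne_zero, Real.log_exp]

lemma phi_pi_div_two : phi (π / 2) = 1 + Real.log 2 := by
  rw [phi, show π * Real.exp 1 / (π / 2) = 2 * Real.exp 1 by field_simp,
    Real.log_mul two_ne_zero (Real.exp_pos 1).ne', Real.log_exp, add_comm]

lemma one_le_phi {t : ℝ} (ht : 0 < t) (htπ : t ≤ π) : 1 ≤ phi t := by
  rw [← phi_pi]
  exact strictAntiOn_phi.antitoneOn ht Real.pi_pos htπ

lemma image_phi_Ioo {c : ℝ} (hc : 0 < c) : phi '' Ioo 0 c = Ioi (phi c) := by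
  refine Subset.antisymm ?_ fun u hu => ?_
  · rintro _ ⟨θ, hθ, rfl⟩
    exact strictAntiOn_phi hθ.1 (hθ.1.trans hθ.2) hθ.2
  have hphi_inv : phi (π * Real.exp 1 * Real.exp (-u)) = u := by
    rw [phi, div_mul_cancel_left₀ (by positivity), ← Real.exp_neg, neg_neg, Real.log_exp]
  refine ⟨_, ⟨by positivity, ?_⟩, hphi_inv⟩
  by_contra! hle
  have := strictAntiOn_phi.antitoneOn hc (hc.trans_le hle) hle
  rw [hphi_inv] at this
  exact (mem_Ioi.1 hu).not_ge this

section ChangeOfVariables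

variable {E : Type*} [NormedAddCommGroup E] [NormedSpace ℝ E] {c : ℝ}

lemma integrableOn_Ioi_phi_iff (hc : 0 < c) (g : ℝ → E) :
    IntegrableOn g (Ioi (phi c)) ↔ IntegrableOn (fun θ => θ⁻¹ • g (phi θ)) (Ioo 0 c) := by
  rw [← image_phi_Ioo hc, integrableOn_image_iff_integrableOn_abs_deriv_smul measurableSet_Ioo
    (fun θ hθ => (hasDerivAt_phi hθ.1).hasDerivWithinAt)
    (strictAntiOn_phi.injOn.mono Ioo_subset_Ioi_self)]
  refine integrableOn_congr_fun (fun θ hθ => ?_) measurableSet_Ioo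
  rw [abs_neg, abs_of_pos (inv_pos.2 hθ.1)]

lemma setIntegral_Ioi_phi (hc : 0 < c) (g : ℝ → E) :
    ∫ u in Ioi (phi c), g u = ∫ θ in Ioo 0 c, θ⁻¹ • g (phi θ) := by
  rw [← image_phi_Ioo hc, integral_image_eq_integral_abs_deriv_smul measurableSet_Ioo
    (fun θ hθ => (hasDerivAt_phi hθ.1).hasDerivWithinAt)
    (strictAntiOn_phi.injOn.mono Ioo_subset_Ioi_self)]
  refine setIntegral_congr_fun measurableSet_Ioo fun θ hθ => ?_
  rw [abs_neg, abs_of_pos (inv_pos.2 hθ.1)]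

end ChangeOfVariables

section RpowIntegrand

variable {p c : ℝ}

lemma integrableOn_inv_mul_phi_rpow (hp : p < -1) (hc : 0 < c) (hphi : 0 < phi c) :
    IntegrableOn (fun θ => θ⁻¹ * phi θ ^ p) (Ioo 0 c) :=
  (integrableOn_Ioi_phi_iff hc _).1 (integrableOn_Ioi_rpow_of_lt hp hphi)

lemma integral_inv_mul_phi_rpow (hp : p < -1) (hc : 0 < c) (hphi : 0 < phi c) :
    ∫ θ in Ioo 0 c, θ⁻¹ * phi θ ^ p = -phi c ^ (p + 1) / (p + 1) := by
  rw [← integral_Ioi_rpow_of_lt hp hphi, setIntegral_Ioi_phi hc]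
  rfl

end RpowIntegrand

lemma abs_sin_div_sq_le_inv {θ : ℝ} (hθ : 0 < θ) : |Real.sin θ| / θ ^ 2 ≤ θ⁻¹ := by
  rw [div_le_iff₀ (by positivity), sq, ← mul_assoc, inv_mul_cancel₀ hθ.ne', one_mul]
  simpa [abs_of_pos hθ] using Real.abs_sin_le_abs (x := θ)

lemma two_div_pi_mul_inv_le_sin_div_sq {θ : ℝ} (hθ : 0 < θ) (hθπ : θ ≤ π / 2) :
    2 / π * θ⁻¹ ≤ Real.sin θ / θ ^ 2 := by
  rw [le_div_iff₀ (by positivity), sq, ← mul_assoc, mul_assoc _ θ⁻¹, inv_mul_cancel₀ hθ.ne',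
    mul_one]
  exact Real.mul_le_sin hθ.le hθπ

section SinIntegrand

variable {p : ℝ}

lemma sin_div_sq_mul_phi_rpow_nonneg {θ : ℝ} (hθ : θ ∈ Ioo 0 π) :
    0 ≤ Real.sin θ / θ ^ 2 * phi θ ^ p :=
  mul_nonneg (div_nonneg (Real.sin_nonneg_of_nonneg_of_le_pi hθ.1.le hθ.2.le) (sq_nonneg θ))
    (Real.rpow_nonneg (zero_le_one.trans (one_le_phi hθ.1 hθ.2.le)) p)

lemma integrableOn_sin_div_sq_mul_phi_rpow (hp : p < -1) :
    IntegrableOn (fun θ => Real.sin θ / θ ^ 2 * phi θ ^ p) (Ioo 0 π) := by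
  refine (integrableOn_inv_mul_phi_rpow hp Real.pi_pos (phi_pi ▸ one_pos)).mono'
    (by unfold phi; fun_prop) ((ae_restrict_iff' measurableSet_Ioo).2 (.of_forall ?_))
  intro θ hθ
  have hphi : 0 ≤ phi θ ^ p := Real.rpow_nonneg (zero_le_one.trans (one_le_phi hθ.1 hθ.2.le)) p
  rw [norm_mul, norm_div, Real.norm_of_nonneg hphi, norm_pow, Real.norm_eq_abs, Real.norm_eq_abs,
    sq_abs]
  exact mul_le_mul_of_nonneg_right (abs_sin_div_sq_le_inv hθ.1) hphi

lemma le_integral_sin_div_sq_mul_phi_rpow (hp : p < -1) :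
    2 / π * (-(1 + Real.log 2) ^ (p + 1) / (p + 1)) ≤
      ∫ θ in Ioo 0 π, Real.sin θ / θ ^ 2 * phi θ ^ p := by
  have hπ2 : 0 < π / 2 := by positivity
  have hsub : Ioo 0 (π / 2) ⊆ Ioo 0 π := Ioo_subset_Ioo_right (by linarith [Real.pi_pos])
  have hphi : 0 < phi (π / 2) := by rw [phi_pi_div_two]; positivity
  have hint := integrableOn_sin_div_sq_mul_phi_rpow hp
  calc 2 / π * (-(1 + Real.log 2) ^ (p + 1) / (p + 1))
      = ∫ θ in Ioo 0 (π / 2), 2 / π * (θ⁻¹ * phi θ ^ p) := by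
        rw [integral_const_mul, integral_inv_mul_phi_rpow hp hπ2 hphi, phi_pi_div_two]
    _ ≤ ∫ θ in Ioo 0 (π / 2), Real.sin θ / θ ^ 2 * phi θ ^ p := by
        refine setIntegral_mono_on ((integrableOn_inv_mul_phi_rpow hp hπ2 hphi).const_mul _)
          (hint.mono_set hsub) measurableSet_Ioo fun θ hθ => ?_
        rw [← mul_assoc]
        exact mul_le_mul_of_nonneg_right (two_div_pi_mul_inv_le_sin_div_sq hθ.1 hθ.2.le)
          (Real.rpow_nonneg (zero_le_one.trans (one_le_phi hθ.1 (hsub hθ).2.le)) p)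
    _ ≤ ∫ θ in Ioo 0 π, Real.sin θ / θ ^ 2 * phi θ ^ p :=
        setIntegral_mono_set hint
          ((ae_restrict_iff' measurableSet_Ioo).2
            (.of_forall fun _ => sin_div_sq_mul_phi_rpow_nonneg))
          hsub.eventuallyLE

end SinIntegrand

lemma tendsto_natCast_div_mul_rpow_div_natCast {a c : ℝ} (ha : a ≠ 0) (hc : 0 < c) (b : ℝ) :
    Tendsto (fun n : ℕ => n / (c * a ^ (b / n))) atTop atTop := by
  have hpow : Tendsto (fun n : ℕ => c * a ^ (b / n)) atTop (nhds c) := by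
    have := ((Real.continuousAt_const_rpow ha).tendsto.comp
      (tendsto_const_div_atTop_nhds_zero_nat b)).const_mul c
    rwa [Real.rpow_zero, mul_one] at this
  exact tendsto_natCast_atTop_atTop.atTop_mul_pos (inv_pos.2 hc) (hpow.inv₀ hc.ne')

/-- For every `n ≥ 1`, `∫₀^π (sin θ/θ²) φ(θ)^{−1−2/n} dθ ≥ n/(π (1+log 2)^{2/n})`;
in particular these integrals tend to `+∞` as `n → ∞`. -/
theorem integral_sin_div_sq_phi_lower_bound :
    (∀ n : ℕ, 1 ≤ n →
      (n : ℝ) / (π * (1 + Real.log 2) ^ ((2 : ℝ) / n)) ≤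
        ∫ θ in Ioo (0 : ℝ) π, (Real.sin θ / θ ^ 2) * phi θ ^ (-(1 + 2 / (n : ℝ)))) ∧
    Tendsto (fun n : ℕ =>
        ∫ θ in Ioo (0 : ℝ) π, (Real.sin θ / θ ^ 2) * phi θ ^ (-(1 + 2 / (n : ℝ))))
      atTop atTop := by
  have lower_bound : ∀ n : ℕ, 1 ≤ n →
      (n : ℝ) / (π * (1 + Real.log 2) ^ ((2 : ℝ) / n)) ≤
        ∫ θ in Ioo (0 : ℝ) π, (Real.sin θ / θ ^ 2) * phi θ ^ (-(1 + 2 / (n : ℝ))) := by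
    intro n hn
    have hn0 : (0 : ℝ) < n := by exact_mod_cast hn
    have hlog : 0 < 1 + Real.log 2 := by positivity
    convert le_integral_sin_div_sq_mul_phi_rpow (p := -(1 + 2 / (n : ℝ))) (by
      linarith [div_pos two_pos hn0]) using 1
    rw [show -(1 + 2 / (n : ℝ)) + 1 = -(2 / n) by ring, Real.rpow_neg hlog.le]
    field_simp
  refine ⟨lower_bound, tendsto_atTop_mono' atTop ?_ (tendsto_natCast_div_mul_rpow_div_natCast
    (by positivity : (1 : ℝ) + Real.log 2 ≠ 0) Real.pi_pos 2)⟩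
  filter_upwards [eventually_ge_atTop 1] with n hn
  exact lower_bound n hn
end
end

section
/- The integrals ∫₀^π (sin θ/θ²)·(log(πe/sin θ))^{−1−s} dθ tend to +∞ as s → 0⁺; more precisely, for every real s > 0 one has ∫₀^π (sin θ/θ²)·(log(πe/sin θ))^{−1−s} dθ ≥ (4/(π² s))·(log(πe/sin 1))^{−s}. -/
/-!
Since `ψ' = -cot`, the function `ψ^{-s}` has derivative `s · cot θ · ψ(θ)^{-1-s}` on `(0, π)`,
and it tends to `0` at `0⁺` because `ψ → ∞` there; hence `∫₀¹ cot θ · ψ^{-1-s} = ψ(1)^{-s} / s`.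
Jordan's inequality `sin θ ≥ 2θ/π` gives `sin θ / θ² ≥ (4/π²) cot θ` on `(0, π/2]`, and the
integrand is nonnegative on `(0, π)`, so the integral is at least `(4/(π² s)) ψ(1)^{-s}`, which
blows up as `s → 0⁺`. Integrability near `0` follows from the reverse comparison
`sin θ / θ² ≤ cot θ / cos 1` on `(0, 1]`.
-/

open Real Set MeasureTheory Filter Topology

noncomputable section

/-- `ψ(t) = log (π e / sin t)`. -/
def psi (t : ℝ) : ℝ := Real.log (π * Real.exp 1 / Real.sin t)
lemma one_le_psi {t : ℝ} (ht : 0 < sin t) : 1 ≤ psi t := by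
  rw [psi, le_log_iff_exp_le (by positivity), le_div_iff₀ ht]
  nlinarith [sin_le_one t, exp_pos 1, pi_gt_three]

lemma psi_zero : psi 0 = 0 := by
  simp [psi]

lemma hasDerivAt_psi {θ : ℝ} (hθ : sin θ ≠ 0) : HasDerivAt psi (-(cos θ / sin θ)) θ := by
  show HasDerivAt (fun t => log (π * exp 1 / sin t)) _ θ
  convert (((hasDerivAt_const θ (π * exp 1)).fun_div (hasDerivAt_sin θ) hθ).log
    (div_ne_zero (by positivity) hθ)) using 1
  field_simp
  ring

lemma hasDerivAt_psi_rpow_neg (s : ℝ) {θ : ℝ} (hθ : 0 < sin θ) :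
    HasDerivAt (fun t => psi t ^ (-s)) (s * (cos θ / sin θ * psi θ ^ (-(1 + s)))) θ := by
  convert (hasDerivAt_psi hθ.ne').rpow_const (p := -s) (Or.inl (by linarith [one_le_psi hθ]))
    using 1
  rw [show -s - 1 = -(1 + s) by ring]
  ring

lemma tendsto_psi_nhdsGT_zero : Tendsto psi (𝓝[>] 0) atTop := by
  have hsin : Tendsto sin (𝓝[>] 0) (𝓝[>] 0) := by
    refine tendsto_nhdsWithin_iff.mpr ⟨?_, ?_⟩
    · exact (continuous_sin.tendsto' 0 0 sin_zero).mono_left nhdsWithin_le_nhds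
    · filter_upwards [Ioo_mem_nhdsGT pi_pos] with t ht
      exact sin_pos_of_pos_of_lt_pi ht.1 ht.2
  have hdiv : Tendsto (fun x : ℝ => π * exp 1 / x) (𝓝[>] 0) atTop := by
    simpa only [div_eq_mul_inv] using tendsto_inv_nhdsGT_zero.const_mul_atTop (by positivity)
  exact tendsto_log_atTop.comp (hdiv.comp hsin)

lemma continuousOn_psi_rpow_neg {s : ℝ} (hs : 0 < s) :
    ContinuousOn (fun t => psi t ^ (-s)) (Ico 0 π) := by
  rintro t ⟨ht0, htπ⟩
  rcases ht0.eq_or_lt with rfl | ht0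
  · -- `psi 0 = log 0 = 0` by the junk conventions, so the right limit `0` is attained at `0`.
    have hlim : ContinuousWithinAt (fun t => psi t ^ (-s)) (Ioi 0) 0 := by
      rw [ContinuousWithinAt, psi_zero, zero_rpow (neg_ne_zero.mpr hs.ne')]
      exact (tendsto_rpow_neg_atTop hs).comp tendsto_psi_nhdsGT_zero
    exact (continuousWithinAt_Ioi_iff_Ici.mp hlim).mono Ico_subset_Ici_self
  · exact (hasDerivAt_psi_rpow_neg s (sin_pos_of_pos_of_lt_pi ht0 htπ)).continuousAt
      |>.continuousWithinAt

lemma four_div_pi_sq_mul_cot_le {θ : ℝ} (h0 : 0 < θ) (hθ : θ ≤ π / 2) :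
    4 / π ^ 2 * (cos θ / sin θ) ≤ sin θ / θ ^ 2 := by
  have hsin : 0 < sin θ := sin_pos_of_pos_of_lt_pi h0 (by linarith [pi_pos])
  have hjordan := mul_le_sin h0.le hθ
  rw [div_mul_div_comm, div_le_div_iff₀ (by positivity) (by positivity)]
  have : 2 / π * θ * (2 / π * θ) ≤ sin θ * sin θ :=
    mul_self_le_mul_self (by positivity) hjordan
  calc 4 * cos θ * θ ^ 2 ≤ 4 * θ ^ 2 := by nlinarith [cos_le_one θ]
    _ = π ^ 2 * (2 / π * θ * (2 / π * θ)) := by field_simp; ring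
    _ ≤ π ^ 2 * (sin θ * sin θ) := by gcongr
    _ = sin θ * (π ^ 2 * sin θ) := by ring

lemma sin_div_sq_mul_cos_le_cot {a θ : ℝ} (h0 : 0 < θ) (hθa : θ ≤ a) (ha : a ≤ π / 2) :
    sin θ / θ ^ 2 * cos a ≤ cos θ / sin θ := by
  have hsin : 0 < sin θ := sin_pos_of_pos_of_lt_pi h0 (by linarith [pi_pos])
  have hcosa : 0 ≤ cos a := cos_nonneg_of_mem_Icc ⟨by linarith [pi_pos], ha⟩
  have hcos : cos a ≤ cos θ := cos_le_cos_of_nonneg_of_le_pi h0.le (by linarith [pi_pos]) hθa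
  have hsq : sin θ * sin θ ≤ θ ^ 2 := by nlinarith [sin_le h0.le]
  rw [div_mul_eq_mul_div, div_le_div_iff₀ (by positivity) hsin]
  calc sin θ * cos a * sin θ = (sin θ * sin θ) * cos a := by ring
    _ ≤ θ ^ 2 * cos θ := mul_le_mul hsq hcos hcosa (by positivity)
    _ = cos θ * θ ^ 2 := by ring

lemma integrableOn_cot_mul_psi_rpow {s b : ℝ} (hs : 0 < s) (hb : b ≤ π / 2) :
    IntegrableOn (fun θ => cos θ / sin θ * psi θ ^ (-(1 + s))) (Ioc 0 b) := by
  have hsin : ∀ x ∈ Ioo 0 b, 0 < sin x := fun x hx =>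
    sin_pos_of_pos_of_lt_pi hx.1 (by linarith [hx.2, pi_pos])
  have hnonneg : ∀ x ∈ Ioo 0 b, 0 ≤ s * (cos x / sin x * psi x ^ (-(1 + s))) := fun x hx => by
    have := cos_nonneg_of_mem_Icc ⟨by linarith [hx.1, pi_pos], hx.2.le.trans hb⟩
    have := rpow_nonneg (zero_le_one.trans (one_le_psi (hsin x hx))) (-(1 + s))
    have := hsin x hx
    positivity
  have hint := intervalIntegral.integrableOn_deriv_of_nonneg
    ((continuousOn_psi_rpow_neg hs).mono (Icc_subset_Ico_right (by linarith [pi_pos])))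
    (fun x hx => hasDerivAt_psi_rpow_neg s (hsin x hx)) hnonneg
  have hcot := hint.const_mul s⁻¹
  simp only [← mul_assoc, inv_mul_cancel₀ hs.ne', one_mul] at hcot
  exact hcot

lemma integral_cot_mul_psi_rpow {s b : ℝ} (hs : 0 < s) (hb0 : 0 ≤ b) (hb : b ≤ π / 2) :
    ∫ θ in Ioc 0 b, cos θ / sin θ * psi θ ^ (-(1 + s)) = psi b ^ (-s) / s := by
  have hftc := intervalIntegral.integral_eq_sub_of_hasDerivAt_of_le hb0
    ((continuousOn_psi_rpow_neg hs).mono (Icc_subset_Ico_right (by linarith [pi_pos])))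
    (fun x hx => hasDerivAt_psi_rpow_neg s (sin_pos_of_pos_of_lt_pi hx.1
      (by linarith [hx.2, pi_pos])))
    (((intervalIntegrable_iff_integrableOn_Ioc_of_le hb0).mpr
      (integrableOn_cot_mul_psi_rpow hs hb)).const_mul s)
  rw [intervalIntegral.integral_of_le hb0, integral_const_mul, psi_zero,
    zero_rpow (neg_ne_zero.mpr hs.ne'), sub_zero] at hftc
  rw [← hftc]
  field_simp

lemma measurable_psi : Measurable psi := by
  unfold psi; fun_prop

lemma integrableOn_sin_div_sq_mul_psi_rpow {s : ℝ} (hs : 0 < s) :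
    IntegrableOn (fun θ => sin θ / θ ^ 2 * psi θ ^ (-(1 + s))) (Ioo 0 π) := by
  have hπ := pi_gt_three
  have hmeas : AEStronglyMeasurable (fun θ => sin θ / θ ^ 2 * psi θ ^ (-(1 + s))) volume := by
    have := measurable_psi; fun_prop
  have hrpow : ∀ θ ∈ Ioo 0 π, 0 ≤ psi θ ^ (-(1 + s)) ∧ psi θ ^ (-(1 + s)) ≤ 1 := fun θ hθ =>
    have hψ := one_le_psi (sin_pos_of_pos_of_lt_pi hθ.1 hθ.2)
    ⟨rpow_nonneg (by linarith) _, rpow_le_one_of_one_le_of_nonpos hψ (by linarith)⟩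
  rw [← Ioc_union_Ico_eq_Ioo one_pos (by linarith)]
  refine IntegrableOn.union ?_ ?_
  · refine Integrable.mono'
      ((integrableOn_cot_mul_psi_rpow hs (by linarith)).const_mul (cos 1)⁻¹) hmeas.restrict ?_
    refine (ae_restrict_iff' measurableSet_Ioc).mpr (ae_of_all _ fun θ hθ => ?_)
    have hsin := sin_pos_of_pos_of_lt_pi hθ.1 (by linarith [hθ.2])
    have hcos1 : 0 < cos 1 := cos_pos_of_mem_Ioo ⟨by linarith, by linarith⟩
    have hbound := sin_div_sq_mul_cos_le_cot hθ.1 hθ.2 (by linarith)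
    obtain ⟨h0, -⟩ := hrpow θ ⟨hθ.1, by linarith [hθ.2]⟩
    rw [norm_of_nonneg (by positivity), ← mul_assoc]
    gcongr
    rwa [le_inv_mul_iff₀ hcos1, mul_comm]
  · refine IntegrableOn.of_bound measure_Ico_lt_top hmeas.restrict 1 ?_
    refine (ae_restrict_iff' measurableSet_Ico).mpr (ae_of_all _ fun θ hθ => ?_)
    have hsin := sin_pos_of_pos_of_lt_pi (by linarith [hθ.1]) hθ.2
    obtain ⟨h0, h1⟩ := hrpow θ ⟨by linarith [hθ.1], hθ.2⟩
    have hsq : sin θ / θ ^ 2 ≤ 1 := by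
      rw [div_le_one (by nlinarith [hθ.1])]
      nlinarith [sin_le_one θ, hθ.1]
    rw [norm_of_nonneg (by positivity)]
    calc sin θ / θ ^ 2 * psi θ ^ (-(1 + s)) ≤ 1 * 1 := by gcongr
      _ = 1 := one_mul 1

lemma le_integral_sin_div_sq_mul_psi_rpow {s : ℝ} (hs : 0 < s) :
    4 / (π ^ 2 * s) * psi 1 ^ (-s) ≤ ∫ θ in Ioo 0 π, sin θ / θ ^ 2 * psi θ ^ (-(1 + s)) := by
  have hπ := pi_gt_three
  calc 4 / (π ^ 2 * s) * psi 1 ^ (-s)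
      = ∫ θ in Ioc 0 1, 4 / π ^ 2 * (cos θ / sin θ * psi θ ^ (-(1 + s))) := by
        rw [integral_const_mul, integral_cot_mul_psi_rpow hs zero_le_one (by linarith)]
        field_simp
    _ ≤ ∫ θ in Ioc 0 1, sin θ / θ ^ 2 * psi θ ^ (-(1 + s)) := by
        refine setIntegral_mono_on ((integrableOn_cot_mul_psi_rpow hs (by linarith)).const_mul _)
          ((integrableOn_sin_div_sq_mul_psi_rpow hs).mono_set
            (Ioc_subset_Ioo_right (by linarith))) measurableSet_Ioc fun θ hθ => ?_
        have hψ := one_le_psi (sin_pos_of_pos_of_lt_pi hθ.1 (by linarith [hθ.2]))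
        rw [← mul_assoc]
        gcongr
        exact four_div_pi_sq_mul_cot_le hθ.1 (by linarith [hθ.2])
    _ ≤ ∫ θ in Ioo 0 π, sin θ / θ ^ 2 * psi θ ^ (-(1 + s)) := by
        refine setIntegral_mono_set (integrableOn_sin_div_sq_mul_psi_rpow hs) ?_
          (Ioc_subset_Ioo_right (by linarith)).eventuallyLE
        refine (ae_restrict_iff' measurableSet_Ioo).mpr (ae_of_all _ fun θ hθ => ?_)
        have hsin := sin_pos_of_pos_of_lt_pi hθ.1 hθ.2
        have := rpow_nonneg (zero_le_one.trans (one_le_psi hsin)) (-(1 + s))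
        positivity

/-- For every `s > 0`,
`∫₀^π (sin θ/θ²) ψ(θ)^{−1−s} dθ ≥ (4/(π² s)) (log(π e/sin 1))^{−s}`;
in particular these integrals tend to `+∞` as `s → 0⁺`. -/
theorem integral_sin_div_sq_psi_lower_bound :
    (∀ s : ℝ, 0 < s →
      (4 / (π ^ 2 * s)) * psi 1 ^ (-s) ≤
        ∫ θ in Ioo (0 : ℝ) π, (Real.sin θ / θ ^ 2) * psi θ ^ (-(1 + s))) ∧
    Tendsto (fun s : ℝ =>
        ∫ θ in Ioo (0 : ℝ) π, (Real.sin θ / θ ^ 2) * psi θ ^ (-(1 + s)))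
      (𝓝[>] (0 : ℝ)) atTop := by
  refine ⟨fun s hs => le_integral_sin_div_sq_mul_psi_rpow hs, ?_⟩
  have hψ : 0 < psi 1 := zero_lt_one.trans_le <|
    one_le_psi (sin_pos_of_pos_of_lt_pi one_pos (by linarith [pi_gt_three]))
  have hpow : Tendsto (fun s : ℝ => psi 1 ^ (-s)) (𝓝[>] 0) (𝓝 1) := by
    have := (continuousAt_const_rpow hψ.ne').tendsto.comp (tendsto_neg (0 : ℝ))
    simpa [Function.comp_def] using this.mono_left nhdsWithin_le_nhds
  have hbound : Tendsto (fun s => 4 / (π ^ 2 * s) * psi 1 ^ (-s)) (𝓝[>] 0) atTop := by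
    refine ((tendsto_inv_nhdsGT_zero.const_mul_atTop (by positivity : 0 < 4 / π ^ 2)).atTop_mul_pos
      one_pos hpow).congr fun s => ?_
    field_simp
  exact tendsto_atTop_mono' _ (eventually_nhdsWithin_of_forall fun s hs =>
    le_integral_sin_div_sq_mul_psi_rpow hs) hbound
end
end
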